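/- Fix α ∈ (1/2, 1), C ∈ ℝ and K > 0, and for n ≥ 2 set R_n = 2 ln n + C, r'_n = ln(K·n), and q_n = (cosh(α r'_n) − 1)/(cosh(α R_n) − 1). Then there exist a constant c₄ > 0 and N such that for all n ≥ N, if Y is a binomial random variable with parameters n and q_n (e.g. PMF.binomial), then P[ Y > 2e·c₄·n^{1−α} ] ≤ 2^{−2e·c₄·n^{1−α}}. (In the hyperbolic random graph model, the number of vertices lying in the disk B_0(r'_n) exceeds 2e c₄ n^{1−α} with probability at most 2^{−2e c₄ n^{1−α}}.) -/

import Mathlib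

open Real Finset Filter
open scoped NNReal ENNReal Nat

set_option linter.deprecated false

/-!
Since `cosh(α r'_n) - 1 ≤ (K n)^α` and `cosh(α R_n) - 1 ≥ e^{α R_n} / 4 = n^{2α} e^{αC} / 4`,
the mean `n q_n` is at most `4 K^α e^{-αC} n^{1-α}`. For a binomial variable with mean `μ`,
`P[Y = k] ≤ (e μ / k)^k`, which is at most `8^{-k} ≤ 2^{-t} 2^{-(k+1)}` for `k > t ≥ 8 e μ`;
summing over `k` gives the tail bound `2^{-t}`.
-/

theorem Nat.choose_mul_pow_le_exp_mul_div_pow (n k : ℕ) {x : ℝ} (hx : 0 ≤ x) :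
    (n.choose k : ℝ) * x ^ k ≤ (exp 1 * n * x / k) ^ k := by
  rcases k.eq_zero_or_pos with rfl | hk
  · simp
  have hk_pos : (0 : ℝ) < k := by exact_mod_cast hk
  have hfac : (k : ℝ) ^ k / k ! ≤ exp 1 ^ k := by
    rw [← exp_nat_mul, mul_one]
    exact pow_div_factorial_le_exp _ hk_pos.le k
  calc (n.choose k : ℝ) * x ^ k ≤ (n : ℝ) ^ k / k ! * x ^ k := by
        gcongr; exact Nat.choose_le_pow_div k n
    _ = (n * x / k) ^ k * ((k : ℝ) ^ k / k !) := by
        rw [div_pow, mul_pow]; field_simp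
    _ ≤ (n * x / k) ^ k * exp 1 ^ k := by gcongr
    _ = (exp 1 * n * x / k) ^ k := by rw [← mul_pow]; ring

theorem PMF.binomial_apply_le (p : ℝ≥0) (hp : p ≤ 1) (n : ℕ) (k : Fin (n + 1)) :
    PMF.binomial p hp n k ≤ ENNReal.ofReal (n.choose k * (p : ℝ) ^ (k : ℕ)) := by
  rw [PMF.binomial_apply, ENNReal.ofReal_mul (by positivity), ENNReal.ofReal_pow p.coe_nonneg,
    ENNReal.ofReal_coe_nnreal, ENNReal.ofReal_natCast]
  calc _ ≤ (p : ℝ≥0∞) ^ (k : ℕ) * 1 * (n.choose k : ℕ) := by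
        gcongr; exact pow_le_one₀ zero_le tsub_le_self
    _ = _ := by ring

theorem geom_sum_half_pow_succ_le_one (m : ℕ) : ∑ i ∈ range m, (1 / 2 : ℝ) ^ (i + 1) ≤ 1 := by
  simp_rw [pow_succ, ← sum_mul]
  linarith [sum_geometric_two_le m]

theorem PMF.binomial_toMeasure_lt_le_two_rpow_neg (p : ℝ≥0) (hp : p ≤ 1) (n : ℕ) {t : ℝ}
    (ht : 8 * exp 1 * n * p ≤ t) :
    (PMF.binomial p hp n).toMeasure {k | t < ((k : ℕ) : ℝ)} ≤ ENNReal.ofReal (2 ^ (-t)) := by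
  have ht0 : 0 ≤ t := le_trans (by positivity) ht
  have hterm : ∀ k : Fin (n + 1), t < (k : ℕ) →
      PMF.binomial p hp n k ≤ ENNReal.ofReal (2 ^ (-t) * (1 / 2) ^ ((k : ℕ) + 1)) := by
    intro k hk
    have hk0 : (0 : ℝ) < (k : ℕ) := ht0.trans_lt hk
    have hratio : exp 1 * n * p / (k : ℕ) ≤ 1 / 8 := by
      rw [div_le_iff₀ hk0]; linarith
    have hhalf : (1 / 2 : ℝ) ^ (k : ℕ) ≤ 2 ^ (-t) := by
      rw [one_div, inv_pow, ← rpow_natCast, ← rpow_neg zero_le_two]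
      exact rpow_le_rpow_of_exponent_le one_le_two (by linarith)
    have hhalf_le : (1 / 2 : ℝ) ^ (k : ℕ) ≤ 1 / 2 :=
      pow_le_of_le_one (by norm_num) (by norm_num) (by exact_mod_cast hk0.ne')
    refine (PMF.binomial_apply_le p hp n k).trans (ENNReal.ofReal_le_ofReal ?_)
    calc (n.choose k : ℝ) * (p : ℝ) ^ (k : ℕ) ≤ (exp 1 * n * p / (k : ℕ)) ^ (k : ℕ) :=
          Nat.choose_mul_pow_le_exp_mul_div_pow n k p.coe_nonneg
      _ ≤ (1 / 8) ^ (k : ℕ) := by gcongr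
      _ = (1 / 2) ^ (k : ℕ) * (1 / 2) ^ (k : ℕ) * (1 / 2) ^ (k : ℕ) := by
          rw [← mul_pow, ← mul_pow]; norm_num
      _ ≤ 2 ^ (-t) * (1 / 2) * (1 / 2) ^ (k : ℕ) := by gcongr
      _ = 2 ^ (-t) * (1 / 2) ^ ((k : ℕ) + 1) := by ring
  classical
  calc (PMF.binomial p hp n).toMeasure {k | t < ((k : ℕ) : ℝ)}
      = ∑ k ∈ univ.filter (fun k : Fin (n + 1) => t < (k : ℕ)), PMF.binomial p hp n k := by
        rw [← PMF.toMeasure_apply_finset, coe_filter_univ]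
    _ ≤ ∑ k ∈ univ.filter (fun k : Fin (n + 1) => t < (k : ℕ)),
          ENNReal.ofReal (2 ^ (-t) * (1 / 2) ^ ((k : ℕ) + 1)) :=
        sum_le_sum fun k hk => hterm k (mem_filter.mp hk).2
    _ = ENNReal.ofReal (∑ k ∈ univ.filter (fun k : Fin (n + 1) => t < (k : ℕ)),
          2 ^ (-t) * (1 / 2) ^ ((k : ℕ) + 1)) :=
        (ENNReal.ofReal_sum_of_nonneg fun k _ => by positivity).symm
    _ ≤ ENNReal.ofReal (2 ^ (-t)) := by
        refine ENNReal.ofReal_le_ofReal ?_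
        calc _ ≤ ∑ k : Fin (n + 1), 2 ^ (-t) * (1 / 2 : ℝ) ^ ((k : ℕ) + 1) :=
              sum_le_sum_of_subset_of_nonneg (filter_subset _ _) fun k _ _ => by positivity
          _ = 2 ^ (-t) * ∑ i ∈ range (n + 1), (1 / 2 : ℝ) ^ (i + 1) := by
              rw [← mul_sum, Fin.sum_univ_eq_sum_range (fun i => (1 / 2 : ℝ) ^ (i + 1))]
          _ ≤ 2 ^ (-t) := mul_le_of_le_one_right (by positivity) (geom_sum_half_pow_succ_le_one _)

noncomputable def innerDiskProb (α C K : ℝ) (n : ℕ) : ℝ :=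
  (cosh (α * log (K * n)) - 1) / (cosh (α * (2 * log n + C)) - 1)

theorem Real.cosh_sub_one_le_exp {x : ℝ} (hx : 0 ≤ x) : cosh x - 1 ≤ exp x := by
  have := exp_le_exp.mpr (neg_le_self hx)
  rw [cosh_eq]; linarith

theorem Real.exp_div_four_le_cosh_sub_one {y : ℝ} (hy : 4 ≤ exp y) : exp y / 4 ≤ cosh y - 1 := by
  have := exp_pos (-y)
  rw [cosh_eq]; linarith

theorem Real.cosh_sub_one_div_cosh_sub_one_le {x y : ℝ} (hx : 0 ≤ x) (hy : 4 ≤ exp y) :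
    (cosh x - 1) / (cosh y - 1) ≤ 4 * exp (x - y) :=
  calc (cosh x - 1) / (cosh y - 1) ≤ exp x / (exp y / 4) :=
        div_le_div₀ (exp_nonneg x) (cosh_sub_one_le_exp hx) (by positivity)
          (exp_div_four_le_cosh_sub_one hy)
    _ = 4 * exp (x - y) := by rw [exp_sub]; field_simp

theorem eventually_natCast_mul_innerDiskProb_le (C : ℝ) {α K : ℝ} (hα : 0 < α) (hK : 0 < K) :
    ∀ᶠ n : ℕ in atTop,
      n * innerDiskProb α C K n ≤ 4 * exp (α * (log K - C)) * (n : ℝ) ^ (1 - α) := by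
  have hlog := tendsto_log_atTop.comp (tendsto_natCast_atTop_atTop (R := ℝ))
  have hR : Tendsto (fun n : ℕ => α * (2 * log n + C)) atTop atTop :=
    ((hlog.const_mul_atTop two_pos).atTop_add tendsto_const_nhds).const_mul_atTop hα
  have hKn : Tendsto (fun n : ℕ => K * n) atTop atTop :=
    tendsto_natCast_atTop_atTop.const_mul_atTop hK
  filter_upwards [hR.eventually_ge_atTop (log 4), hKn.eventually_ge_atTop 1,
    eventually_gt_atTop 0] with n hR4 hKn1 hn
  have hn_pos : (0 : ℝ) < n := by exact_mod_cast hn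
  have hq : innerDiskProb α C K n ≤ 4 * exp (α * log (K * n) - α * (2 * log n + C)) :=
    cosh_sub_one_div_cosh_sub_one_le (mul_nonneg hα.le (log_nonneg hKn1))
      ((log_le_iff_le_exp (by norm_num)).mp hR4)
  calc n * innerDiskProb α C K n ≤ n * (4 * exp (α * log (K * n) - α * (2 * log n + C))) := by
        gcongr
    _ = 4 * exp (α * (log K - C)) * (n : ℝ) ^ (1 - α) := by
        rw [rpow_def_of_pos hn_pos, log_mul hK.ne' hn_pos.ne']
        nth_rewrite 1 [← exp_log hn_pos]
        rw [mul_left_comm, ← exp_add, mul_assoc, ← exp_add]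
        ring_nf

/-- Chernoff-type upper-tail bound for the number of vertices of a hyperbolic random
graph lying in the disk `B_0(r'_n)` where `R_n = 2 ln n + C`, `r'_n = ln(K n)` and
`q_n = (cosh(α r'_n) - 1)/(cosh(α R_n) - 1)`: there is a constant `c₄ > 0` such that
for all sufficiently large `n`, a binomial random variable `Y` with parameters `n` and
`q_n` satisfies `P[Y > 2e c₄ n^(1-α)] ≤ 2^{-2e c₄ n^(1-α)}`. -/
theorem binomial_inner_disk_upper_tail (α C K : ℝ)
    (hα : 1 / 2 < α) (hK : 0 < K) :
    ∃ c₄ > 0, ∃ N : ℕ, ∀ n : ℕ, N ≤ n →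
      ∀ h : ENNReal.ofReal
          ((Real.cosh (α * Real.log (K * n)) - 1) /
            (Real.cosh (α * (2 * Real.log n + C)) - 1)) ≤ 1,
        (PMF.binomial
            (ENNReal.ofReal
              ((Real.cosh (α * Real.log (K * n)) - 1) /
                (Real.cosh (α * (2 * Real.log n + C)) - 1))).toNNReal
            (by simpa using ENNReal.toNNReal_mono ENNReal.one_ne_top h) n).toMeasure
            {k : Fin (n + 1) |
              2 * Real.exp 1 * c₄ * (n : ℝ) ^ (1 - α) < ((k : ℕ) : ℝ)}
          ≤ ENNReal.ofReal
              ((2 : ℝ) ^ (-(2 * Real.exp 1 * c₄ * (n : ℝ) ^ (1 - α)))) := by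
  obtain ⟨N, hN⟩ :=
    eventually_atTop.mp (eventually_natCast_mul_innerDiskProb_le C (by linarith : 0 < α) hK)
  refine ⟨16 * exp (α * (log K - C)), by positivity, N, fun n hn h =>
    PMF.binomial_toMeasure_lt_le_two_rpow_neg _ _ _ ?_⟩
  have hmean : (n : ℝ) * (ENNReal.ofReal (innerDiskProb α C K n)).toNNReal ≤
      4 * exp (α * (log K - C)) * (n : ℝ) ^ (1 - α) := by
    rw [ENNReal.ofReal, ENNReal.toNNReal_coe, Real.coe_toNNReal',
      mul_max_of_nonneg _ _ n.cast_nonneg, mul_zero]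
    exact max_le (hN n hn) (by positivity)
  calc 8 * exp 1 * n * (ENNReal.ofReal (innerDiskProb α C K n)).toNNReal
      ≤ 8 * exp 1 * (4 * exp (α * (log K - C)) * (n : ℝ) ^ (1 - α)) := by
        rw [mul_assoc]; gcongr
    _ = 2 * exp 1 * (16 * exp (α * (log K - C))) * (n : ℝ) ^ (1 - α) := by ring
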